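/- arXiv:math/0508178 — 4 statements merged into one kernel-verified Lean document; each statement's English description precedes it below -/
import Mathlib

section
/- The normalized in-forest matrix J_k = σ_k^{-1} Q_k is row stochastic for each k = 0, …, n−d, where d is the in-forest dimension of Γ. -/
open Matrix Finset Polynomial

/-- `A` is (the arc set of) an in-forest of the weighted digraph with arc-weight
matrix `W`: all arcs are loopless arcs of positive weight, every vertex has
outdegree at most one, and there are no directed cycles. -/
def IsInForest {n : ℕ} (W : Matrix (Fin n) (Fin n) ℝ)
    (A : Finset (Fin n × Fin n)) : Prop :=
  (∀ e ∈ A, e.1 ≠ e.2 ∧ 0 < W e.1 e.2) ∧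
  (∀ i : Fin n, (A.filter (fun e => e.1 = i)).card ≤ 1) ∧
  (∀ i : Fin n, ¬ Relation.TransGen (fun a b => (a, b) ∈ A) i i)

/-- The weight of a forest: the product of its arc weights. -/
def forestWeight {n : ℕ} (W : Matrix (Fin n) (Fin n) ℝ)
    (A : Finset (Fin n × Fin n)) : ℝ :=
  ∏ e ∈ A, W e.1 e.2

/-- `i` belongs to the tree of the forest `A` converging to (rooted at) `j`. -/
def InTreeRootedAt {n : ℕ} (A : Finset (Fin n × Fin n)) (i j : Fin n) : Prop :=
  Relation.ReflTransGen (fun a b => (a, b) ∈ A) i j ∧ ∀ e ∈ A, e.1 ≠ j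

open scoped Classical in
/-- `σ_k`: the total weight of in-forests with `k` arcs. -/
noncomputable def sigmaW {n : ℕ} (W : Matrix (Fin n) (Fin n) ℝ) (k : ℕ) : ℝ :=
  ∑ A ∈ Finset.univ.powerset.filter
      (fun A => IsInForest W A ∧ A.card = k), forestWeight W A

open scoped Classical in
/-- `Q_k`: the matrix of in-forests with `k` arcs; its `(i,j)` entry is the total
weight of in-forests with `k` arcs in which `i` belongs to a tree rooted at `j`. -/
noncomputable def forestMatrix {n : ℕ} (W : Matrix (Fin n) (Fin n) ℝ) (k : ℕ) :
    Matrix (Fin n) (Fin n) ℝ :=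
  Matrix.of fun i j =>
    ∑ A ∈ Finset.univ.powerset.filter
        (fun A => IsInForest W A ∧ A.card = k ∧ InTreeRootedAt A i j),
      forestWeight W A

open scoped Classical in
/-- `σ`: the total weight of all in-forests. -/
noncomputable def sigmaTot {n : ℕ} (W : Matrix (Fin n) (Fin n) ℝ) : ℝ :=
  ∑ A ∈ Finset.univ.powerset.filter (fun A => IsInForest W A), forestWeight W A

open scoped Classical in
/-- `Q`: the matrix of all in-forests. -/
noncomputable def forestMatrixTot {n : ℕ} (W : Matrix (Fin n) (Fin n) ℝ) :
    Matrix (Fin n) (Fin n) ℝ :=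
  Matrix.of fun i j =>
    ∑ A ∈ Finset.univ.powerset.filter
        (fun A => IsInForest W A ∧ InTreeRootedAt A i j), forestWeight W A

open scoped Classical in
/-- The number of arcs in a maximum in-forest (equal to `n - d` where `d` is the
in-forest dimension). -/
noncomputable def maxForestCard {n : ℕ} (W : Matrix (Fin n) (Fin n) ℝ) : ℕ :=
  (Finset.univ.powerset.filter (fun A => IsInForest W A)).sup Finset.card

/-- The in-forest dimension `d` of the digraph. -/
noncomputable def forestDim {n : ℕ} (W : Matrix (Fin n) (Fin n) ℝ) : ℕ :=
  n - maxForestCard W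

/-- The (row) Laplacian matrix of the weighted digraph with arc-weight matrix `W`. -/
def lap {n : ℕ} (W : Matrix (Fin n) (Fin n) ℝ) : Matrix (Fin n) (Fin n) ℝ :=
  Matrix.diagonal (fun i => ∑ j, W i j) - W

/-- `J̃`: the normalized matrix of maximum in-forests. -/
noncomputable def Jtilde {n : ℕ} (W : Matrix (Fin n) (Fin n) ℝ) :
    Matrix (Fin n) (Fin n) ℝ :=
  (sigmaW W (maxForestCard W))⁻¹ • forestMatrix W (maxForestCard W)

/- Every vertex of an in-forest lies in the tree of exactly one root (follow the unique outgoing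
arcs; acyclicity makes the walk terminate), so summing row `i` of `Q_k` counts every `k`-arc
in-forest exactly once and gives `σ_k`, which is positive as long as a `k`-arc in-forest exists. -/

section InForest

variable {n : ℕ} {W : Matrix (Fin n) (Fin n) ℝ} {A B : Finset (Fin n × Fin n)}

lemma forestWeight_pos (h : IsInForest W A) : 0 < forestWeight W A :=
  prod_pos fun e he => (h.1 e he).2

lemma isInForest_empty : IsInForest W ∅ :=
  ⟨by simp, by simp, fun _ hi => by cases hi <;> simp_all⟩

lemma IsInForest.mono (h : IsInForest W A) (hBA : B ⊆ A) : IsInForest W B :=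
  ⟨fun e he => h.1 e (hBA he),
    fun i => (card_le_card (filter_subset_filter _ hBA)).trans (h.2.1 i),
    fun i hi => h.2.2 i (Relation.TransGen.mono (fun _ _ hab => hBA hab) i i hi)⟩

lemma exists_isInForest_card_eq {k : ℕ} (hk : k ≤ maxForestCard W) :
    ∃ A, IsInForest W A ∧ A.card = k := by
  classical
  obtain ⟨A, hA, hcard⟩ := exists_mem_eq_sup
    (univ.powerset.filter (IsInForest W)) ⟨∅, by simp [isInForest_empty]⟩ card
  rw [maxForestCard, hcard] at hk
  obtain ⟨B, hBA, hBk⟩ := exists_subset_card_eq hk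
  exact ⟨B, (mem_filter.mp hA).2.mono hBA, hBk⟩

lemma sigmaW_pos {k : ℕ} (hk : k ≤ maxForestCard W) : 0 < sigmaW W k := by
  classical
  obtain ⟨A, hA, hcard⟩ := exists_isInForest_card_eq hk
  exact sum_pos (fun B hB => forestWeight_pos (mem_filter.mp hB).2.1)
    ⟨A, by simp [hA, hcard]⟩

lemma IsInForest.wellFounded_arc (h : IsInForest W A) :
    WellFounded fun b a => Relation.TransGen (fun a b => (a, b) ∈ A) a b :=
  have : IsTrans (Fin n) fun b a => Relation.TransGen (fun a b => (a, b) ∈ A) a b :=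
    ⟨fun _ _ _ hab hbc => hbc.trans hab⟩
  have : Std.Irrefl fun b a => Relation.TransGen (fun a b => (a, b) ∈ A) a b :=
    ⟨h.2.2⟩
  Finite.wellFounded_of_trans_of_irrefl _

lemma IsInForest.exists_inTreeRootedAt (h : IsInForest W A) (i : Fin n) :
    ∃ j, InTreeRootedAt A i j := by
  induction i using h.wellFounded_arc.induction with
  | _ i ih =>
    by_cases hi : ∃ e ∈ A, e.1 = i
    · obtain ⟨⟨_, b⟩, hab, rfl⟩ := hi
      obtain ⟨j, hbj, hroot⟩ := ih b (.single hab)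
      exact ⟨j, .head hab hbj, hroot⟩
    · exact ⟨i, .refl, fun e he hei => hi ⟨e, he, hei⟩⟩

lemma IsInForest.eq_of_arc_of_arc (h : IsInForest W A) {a b c : Fin n}
    (hab : (a, b) ∈ A) (hac : (a, c) ∈ A) : b = c :=
  congrArg Prod.snd <|
    card_le_one.mp (h.2.1 a) _ (mem_filter.mpr ⟨hab, rfl⟩) _ (mem_filter.mpr ⟨hac, rfl⟩)

lemma IsInForest.inTreeRootedAt_unique (h : IsInForest W A) {i j₁ j₂ : Fin n}
    (h₁ : InTreeRootedAt A i j₁) (h₂ : InTreeRootedAt A i j₂) : j₁ = j₂ := by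
  obtain ⟨hpath, hroot₁⟩ := h₁
  induction hpath using Relation.ReflTransGen.head_induction_on with
  | refl =>
    rcases h₂.1.cases_head with rfl | ⟨b, hab, -⟩
    · rfl
    · exact absurd rfl (hroot₁ _ hab)
  | head hab _ ih =>
    rcases h₂.1.cases_head with rfl | ⟨c, hac, hcj⟩
    · exact absurd rfl (h₂.2 _ hab)
    · exact ih ⟨h.eq_of_arc_of_arc hab hac ▸ hcj, h₂.2⟩

lemma IsInForest.existsUnique_inTreeRootedAt (h : IsInForest W A) (i : Fin n) :
    ∃! j, InTreeRootedAt A i j :=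
  let ⟨j, hj⟩ := h.exists_inTreeRootedAt i
  ⟨j, hj, fun _ hj' => h.inTreeRootedAt_unique hj' hj⟩

end InForest

section ForestMatrix

variable {n : ℕ} (W : Matrix (Fin n) (Fin n) ℝ) (k : ℕ)

lemma forestMatrix_nonneg (i j : Fin n) : 0 ≤ forestMatrix W k i j := by
  classical
  exact sum_nonneg fun _ hA => (forestWeight_pos (mem_filter.mp hA).2.1).le

lemma sum_forestMatrix_row (i : Fin n) : ∑ j, forestMatrix W k i j = sigmaW W k := by
  classical
  have hentry : ∀ j, forestMatrix W k i j =
      ∑ A ∈ univ.powerset.filter (fun A => IsInForest W A ∧ A.card = k),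
        if InTreeRootedAt A i j then forestWeight W A else 0 := fun j => by
    rw [← sum_filter, filter_filter]
    simp only [forestMatrix, of_apply, and_assoc]
  rw [sum_congr rfl fun j _ => hentry j, sum_comm, sigmaW]
  refine sum_congr rfl fun A hA => ?_
  obtain ⟨j, hj, huniq⟩ := (mem_filter.mp hA).2.1.existsUnique_inTreeRootedAt i
  rw [sum_eq_single j (fun j' _ hj' => if_neg fun h => hj' (huniq j' h)) (by simp),
    if_pos hj]

end ForestMatrix

theorem forestMatrix_normalized_rowStochastic_general {n : ℕ} (W : Matrix (Fin n) (Fin n) ℝ)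
    (k : ℕ) (hk : k ≤ maxForestCard W) :
    (∀ i j, 0 ≤ ((sigmaW W k)⁻¹ • forestMatrix W k) i j) ∧
    (∀ i : Fin n, ∑ j, ((sigmaW W k)⁻¹ • forestMatrix W k) i j = 1) := by
  have hσ : 0 < sigmaW W k := sigmaW_pos hk
  refine ⟨fun i j => ?_, fun i => ?_⟩
  · exact mul_nonneg (inv_nonneg.mpr hσ.le) (forestMatrix_nonneg W k i j)
  · simp only [Matrix.smul_apply, smul_eq_mul, ← mul_sum, sum_forestMatrix_row]
    exact inv_mul_cancel₀ hσ.ne'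

/-- The normalized in-forest matrix `J_k = σ_k⁻¹ Q_k` is row stochastic for
`k = 0, …, n − d`. -/
theorem forestMatrix_normalized_rowStochastic {n : ℕ} (W : Matrix (Fin n) (Fin n) ℝ)
    (hn : 1 < n) (hW : ∀ i j, 0 ≤ W i j) (hdiag : ∀ i, W i i = 0)
    (k : ℕ) (hk : k ≤ maxForestCard W) :
    (∀ i j, 0 ≤ ((sigmaW W k)⁻¹ • forestMatrix W k) i j) ∧
    (∀ i : Fin n, ∑ j, ((sigmaW W k)⁻¹ • forestMatrix W k) i j = 1) :=
  forestMatrix_normalized_rowStochastic_general W k hk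
end

section
/- For a weighted digraph Γ with Laplacian matrix L, Q = adj(I + L) and σ = det(I + L), where Q is the matrix of all in-forests and σ is the total weight of all in-forests; consequently J = σ^{-1}Q = (I + L)^{-1}. -/
open Matrix Finset Polynomial

/-!
Expanding row `i` of `1 + L` as `eᵢ + ∑ⱼ wᵢⱼ (eᵢ - eⱼ)` and using multilinearity of the
determinant gives `det (1 + L) = ∑_c w(c) det (1 - P_c)`, where `c` assigns to every vertex at
most one out-neighbour and `P_c` is the adjacency matrix of the resulting digraph. If `c` has a
cycle, the rows of `1 - P_c` indexed by the cyclic vertices sum to zero. Otherwise `1 - P_c` is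
unitriangular once the vertices are ordered by their number of ancestors, so its determinant
is `1` and its adjugate is its inverse, the reachability matrix. The surviving `c` are exactly
the in-forests; for the entry `(i, j)` of the adjugate the same expansion, with row `j`
replaced by `eᵢ`, keeps the forests in which `j` is a root reachable from `i`.
-/

namespace MatrixForest

open Relation

section Digraph

variable {ι : Type*} {c : ι → Option ι}

def Arc (c : ι → Option ι) (a b : ι) : Prop := c a = some b

def IsAcyclic (c : ι → Option ι) : Prop := ∀ x, ¬ TransGen (Arc c) x x

variable [Fintype ι]

open scoped Classical in
noncomputable def ancestors (c : ι → Option ι) (i : ι) : Finset ι :=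
  univ.filter fun k => TransGen (Arc c) k i

lemma card_ancestors_lt (hc : IsAcyclic c) {i j : ι} (hij : Arc c i j) :
    #(ancestors c i) < #(ancestors c j) := by
  refine card_lt_card ((ssubset_iff_of_subset fun k hk => ?_).2 ⟨i, ?_, fun hi => ?_⟩)
  · simp only [ancestors, mem_filter, mem_univ, true_and] at hk ⊢
    exact hk.tail hij
  · simpa [ancestors] using TransGen.single hij
  · exact hc i (by simpa [ancestors] using hi)

open scoped Classical in
noncomputable def cycleVertices (c : ι → Option ι) : Finset ι :=
  univ.filter fun k => TransGen (Arc c) k k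

end Digraph

section Matrices

variable {ι : Type*} [DecidableEq ι] {R : Type*} [CommRing R] {c : ι → Option ι}

def arcRow (o : Option ι) : ι → R := fun j => if o = some j then 1 else 0

def arcMatrix (c : ι → Option ι) : Matrix ι ι R := of fun i => arcRow (c i)

open scoped Classical in
noncomputable def reachMatrix (c : ι → Option ι) : Matrix ι ι R :=
  of fun i j => if ReflTransGen (Arc c) i j then 1 else 0

lemma arcRow_some (m : ι) : (arcRow (some m) : ι → R) = (1 : Matrix ι ι R) m := by
  funext j
  simp [arcRow, one_apply]

lemma reachMatrix_apply_eq (hc : IsAcyclic c) (i j : ι) :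
    (reachMatrix c : Matrix ι ι R) i j
      = (1 : Matrix ι ι R) i j + (c i).elim 0 (fun k => reachMatrix c k j) := by
  classical
  by_cases hij : i = j
  · subst hij
    cases h : c i with
    | none => simp [reachMatrix, ReflTransGen.refl]
    | some k =>
      have : ¬ ReflTransGen (Arc c) k i := fun hk => hc i (TransGen.head' h hk)
      simp [reachMatrix, this, ReflTransGen.refl]
  · cases h : c i with
    | none =>
      have : ¬ ReflTransGen (Arc c) i j := fun hr => by
        obtain ⟨k, hk, -⟩ := (ReflTransGen.cases_head_iff.mp hr).resolve_left hij
        simp [Arc, h] at hk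
      simp [reachMatrix, this, hij]
    | some k =>
      have : ReflTransGen (Arc c) i j ↔ ReflTransGen (Arc c) k j := by
        rw [ReflTransGen.cases_head_iff]
        simp [hij, Arc, h]
      simp [reachMatrix, this, hij]

variable [Fintype ι]

lemma det_eq_zero_of_sum_rows_eq_zero {M : Matrix ι ι R} {S : Finset ι} {k : ι} (hk : k ∈ S)
    (h : ∑ i ∈ S, M i = 0) : M.det = 0 :=
  calc M.det = (M.updateRow k (∑ i, (if i ∈ S then 1 else 0 : R) • M i)).det := by
        rw [det_updateRow_sum, if_pos hk, one_smul]
    _ = 0 := by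
        simp_rw [ite_smul, one_smul, zero_smul]
        rw [Fintype.sum_ite_mem S M, h]
        exact det_eq_zero_of_row_eq_zero k (by simp)

lemma det_eq_sum_prod_mul_det {κ : Type*} [Fintype κ] {M : Matrix ι ι R} (a : ι → κ → R)
    (u : ι → κ → ι → R) (hM : ∀ i, M i = ∑ o, a i o • u i o) :
    M.det = ∑ f : ι → κ, (∏ i, a i (f i)) * (of fun i => u i (f i)).det := by
  have hM' : M = of fun i => ∑ o, a i o • u i o := funext hM
  subst hM'
  exact (detRowAlternating.toMultilinearMap.map_sum fun i o => a i o • u i o).trans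
    (sum_congr rfl fun f _ => by rw [MultilinearMap.map_smul_univ, smul_eq_mul]; rfl)

lemma arcMatrix_mul_apply (M : Matrix ι ι R) (i j : ι) :
    (arcMatrix c * M : Matrix ι ι R) i j = (c i).elim 0 (fun k => M k j) := by
  cases h : c i <;> simp [arcMatrix, arcRow, mul_apply, h]

lemma one_sub_arcMatrix_mul_reachMatrix (hc : IsAcyclic c) :
    (1 - arcMatrix c) * reachMatrix c = (1 : Matrix ι ι R) := by
  ext i j
  rw [sub_mul, one_mul, Matrix.sub_apply, arcMatrix_mul_apply, reachMatrix_apply_eq hc,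
    add_sub_cancel_right]

lemma blockTriangular_one_sub_arcMatrix (hc : IsAcyclic c) :
    BlockTriangular (1 - arcMatrix c : Matrix ι ι R) (fun i => #(ancestors c i)) := by
  intro i j hji
  have hne : i ≠ j := by rintro rfl; exact lt_irrefl _ hji
  have hnarc : ¬ Arc c i j := fun h => (card_ancestors_lt hc h).not_gt hji
  simp_all [arcMatrix, arcRow, Arc]

lemma det_one_sub_arcMatrix_of_isAcyclic (hc : IsAcyclic c) :
    (1 - arcMatrix c : Matrix ι ι R).det = 1 := by
  rw [(blockTriangular_one_sub_arcMatrix hc).det]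
  refine prod_eq_one fun a _ => ?_
  suffices h : (1 - arcMatrix c : Matrix ι ι R).toSquareBlock (fun i => #(ancestors c i)) a = 1 by
    rw [h, det_one]
  ext ⟨i, hi⟩ ⟨j, hj⟩
  have hnarc : ¬ Arc c i j := fun h => (card_ancestors_lt hc h).ne (hi.trans hj.symm)
  simp_all [toSquareBlock_def, arcMatrix, arcRow, Arc, one_apply]

lemma adjugate_one_sub_arcMatrix_of_isAcyclic (hc : IsAcyclic c) :
    (1 - arcMatrix c : Matrix ι ι R).adjugate = reachMatrix c :=
  calc (1 - arcMatrix c : Matrix ι ι R).adjugate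
      = (1 - arcMatrix c : Matrix ι ι R).adjugate * ((1 - arcMatrix c) * reachMatrix c) := by
        rw [one_sub_arcMatrix_mul_reachMatrix hc, mul_one]
    _ = reachMatrix c := by
        rw [← mul_assoc, adjugate_mul, det_one_sub_arcMatrix_of_isAcyclic hc, one_smul, one_mul]

lemma sum_rows_one_sub_arcMatrix_cycleVertices :
    ∑ k ∈ cycleVertices c, (1 - arcMatrix c : Matrix ι ι R) k = 0 := by
  set S := cycleVertices c
  have mem_S : ∀ k, k ∈ S ↔ TransGen (Arc c) k k := by simp [S, cycleVertices]
  let next k := (c k).getD k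
  have arc_next : ∀ k ∈ S, c k = some (next k) ∧ next k ∈ S := by
    intro k hk
    obtain ⟨b, hkb, hbk⟩ := TransGen.head'_iff.mp ((mem_S k).mp hk)
    simp only [Arc] at hkb
    have hnext : next k = b := by simp [next, hkb]
    exact ⟨hnext ▸ hkb, hnext ▸ (mem_S b).mpr (TransGen.tail' hbk hkb)⟩
  have surj : Set.SurjOn next S S := by
    intro m hm
    obtain ⟨b, hmb, hbm⟩ := TransGen.tail'_iff.mp ((mem_S m).mp hm)
    have hbS : b ∈ S := (mem_S b).mpr (TransGen.head' hbm hmb)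
    exact ⟨b, hbS, by simp only [next, show c b = some m from hbm, Option.getD_some]⟩
  have maps : Set.MapsTo next S S := fun k hk => (arc_next k hk).2
  -- `next` permutes the cyclic vertices: it is onto, hence injective on a finite set
  have hperm : ∑ k ∈ S, (arcMatrix c : Matrix ι ι R) k = ∑ m ∈ S, (1 : Matrix ι ι R) m :=
    sum_nbij next maps (injOn_of_surjOn_of_card_le next maps surj le_rfl) surj
      fun k hk => by rw [← arcRow_some, ← (arc_next k hk).1]; rfl
  calc ∑ k ∈ S, (1 - arcMatrix c : Matrix ι ι R) k
      = ∑ k ∈ S, (1 : Matrix ι ι R) k - ∑ k ∈ S, (arcMatrix c : Matrix ι ι R) k :=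
        Finset.sum_sub_distrib _ _
    _ = 0 := by rw [hperm, sub_self]

lemma det_eq_zero_of_rows_eq_one_sub_arcMatrix (hc : ¬ IsAcyclic c) {M : Matrix ι ι R}
    (hM : ∀ k, TransGen (Arc c) k k → M k = (1 - arcMatrix c : Matrix ι ι R) k) :
    M.det = 0 := by
  obtain ⟨x, hx⟩ := not_forall_not.mp hc
  refine det_eq_zero_of_sum_rows_eq_zero (S := cycleVertices c) (k := x)
    (by simpa [cycleVertices] using hx) ?_
  rw [← sum_rows_one_sub_arcMatrix_cycleVertices (c := c)]
  exact sum_congr rfl fun k hk => hM k (by simpa [cycleVertices] using hk)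

open scoped Classical in
lemma det_one_sub_arcMatrix :
    (1 - arcMatrix c : Matrix ι ι R).det = if IsAcyclic c then 1 else 0 := by
  split_ifs with hc
  · exact det_one_sub_arcMatrix_of_isAcyclic hc
  · exact det_eq_zero_of_rows_eq_one_sub_arcMatrix hc fun _ _ => rfl

open scoped Classical in
lemma adjugate_one_sub_arcMatrix_apply {i j : ι} (hj : c j = none) :
    (1 - arcMatrix c : Matrix ι ι R).adjugate i j
      = if IsAcyclic c ∧ ReflTransGen (Arc c) i j then 1 else 0 := by
  by_cases hc : IsAcyclic c
  · simp [adjugate_one_sub_arcMatrix_of_isAcyclic hc, reachMatrix, hc]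
  · rw [if_neg (fun h => hc h.1), adjugate_apply]
    refine det_eq_zero_of_rows_eq_one_sub_arcMatrix hc fun k hk => updateRow_ne ?_
    rintro rfl
    obtain ⟨b, hb, -⟩ := TransGen.head'_iff.mp hk
    simp [Arc, hj] at hb

end Matrices

section Arcs

variable {ι : Type*} [Fintype ι] [DecidableEq ι] {c : ι → Option ι}

def arcs (c : ι → Option ι) : Finset (ι × ι) := univ.filter fun e => c e.1 = some e.2

@[simp]
lemma mem_arcs {a b : ι} : (a, b) ∈ arcs c ↔ Arc c a b := by
  simp [arcs, Arc]

lemma arcs_rel : (fun a b => (a, b) ∈ arcs c) = Arc c := by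
  simp

lemma arcs_injective : Function.Injective (arcs : (ι → Option ι) → Finset (ι × ι)) := by
  intro c₁ c₂ h
  funext a
  cases h₁ : c₁ a with
  | none =>
    by_contra h₂
    obtain ⟨b, hb⟩ := Option.ne_none_iff_exists'.mp (Ne.symm h₂)
    have : (a, b) ∈ arcs c₁ := by rw [h]; exact mem_arcs.mpr hb
    simp [Arc, h₁] at this
  | some b =>
    have : (a, b) ∈ arcs c₂ := by rw [← h]; exact mem_arcs.mpr h₁
    exact (mem_arcs.mp this).symm

lemma exists_arcs_eq {A : Finset (ι × ι)} (hA : ∀ i, #(A.filter fun e => e.1 = i) ≤ 1) :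
    ∃ c, arcs c = A := by
  classical
  refine ⟨fun a => if h : ∃ b, (a, b) ∈ A then some h.choose else none, ?_⟩
  ext ⟨a, b⟩
  rw [mem_arcs, Arc]
  constructor
  · intro hab
    split_ifs at hab with h
    exact Option.some_injective _ hab ▸ h.choose_spec
  · intro hab
    have h : ∃ b, (a, b) ∈ A := ⟨b, hab⟩
    rw [dif_pos h]
    have := card_le_one.mp (hA a) _ (mem_filter.mpr ⟨h.choose_spec, rfl⟩) _
      (mem_filter.mpr ⟨hab, rfl⟩)
    exact congrArg (some ∘ Prod.snd) this

end Arcs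

section Forests

variable {n : ℕ} {W : Matrix (Fin n) (Fin n) ℝ} {c : Fin n → Option (Fin n)}

lemma one_add_lap_row (W : Matrix (Fin n) (Fin n) ℝ) (i : Fin n) :
    (1 + lap W) i
      = ∑ o : Option (Fin n), o.elim 1 (W i) • ((1 : Matrix _ _ ℝ) i - arcRow o) := by
  funext k
  simp [Fintype.sum_option, lap, arcRow, one_apply, diagonal_apply, Finset.sum_apply, mul_sub]
  split_ifs <;> ring

lemma det_one_add_lap (W : Matrix (Fin n) (Fin n) ℝ) :
    (1 + lap W).det = ∑ c : Fin n → Option (Fin n),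
      (∏ i, (c i).elim 1 (W i)) * (1 - arcMatrix c : Matrix _ _ ℝ).det :=
  det_eq_sum_prod_mul_det _ _ (one_add_lap_row W)

/-- The entry `(i, j)` of the adjugate does not see row `j`, so we may expand it with the weights
of `W` with row `j` zeroed: this kills every `c` with an arc out of `j`. -/
lemma adjugate_one_add_lap_apply (W : Matrix (Fin n) (Fin n) ℝ) (i j : Fin n) :
    (1 + lap W).adjugate i j = ∑ c : Fin n → Option (Fin n),
      (∏ k, (c k).elim 1 (W.updateRow j 0 k)) * (1 - arcMatrix c : Matrix _ _ ℝ).adjugate i j := by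
  rw [adjugate_apply, det_eq_sum_prod_mul_det (fun k o => o.elim 1 (W.updateRow j 0 k))
    (fun k o => if k = j then Pi.single i 1 else (1 : Matrix _ _ ℝ) k - arcRow o)]
  · refine sum_congr rfl fun c _ => ?_
    rw [adjugate_apply]
    congr 2
    ext k l
    by_cases hk : k = j
    · subst hk; simp
    · simp [hk, arcMatrix]
  · intro k
    by_cases hk : k = j
    · subst hk
      simp [Fintype.sum_option]
    · rw [updateRow_ne hk, one_add_lap_row]
      simp [hk]

lemma prod_elim_updateRow_zero (W : Matrix (Fin n) (Fin n) ℝ) (c : Fin n → Option (Fin n))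
    (j : Fin n) : ∏ k, (c k).elim 1 (W.updateRow j 0 k)
      = if c j = none then ∏ k, (c k).elim 1 (W k) else 0 := by
  split_ifs with hj
  · refine prod_congr rfl fun k _ => ?_
    by_cases hk : k = j
    · subst hk; simp [hj]
    · rw [updateRow_ne hk]
  · obtain ⟨b, hb⟩ := Option.ne_none_iff_exists'.mp hj
    exact prod_eq_zero (mem_univ j) (by simp [hb])

lemma isInForest_arcs_iff :
    IsInForest W (arcs c) ↔ IsAcyclic c ∧ ∀ a b, Arc c a b → 0 < W a b := by
  simp only [IsInForest, arcs_rel]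
  constructor
  · rintro ⟨harcs, -, hc⟩
    exact ⟨hc, fun a b h => (harcs (a, b) (mem_arcs.mpr h)).2⟩
  · rintro ⟨hc, hpos⟩
    refine ⟨fun ⟨a, b⟩ h => ?_, fun i => card_le_one.mpr ?_, hc⟩
    · have h := mem_arcs.mp h
      refine ⟨fun hab => hc a (TransGen.single ?_), hpos a b h⟩
      simpa [show b = a from hab.symm] using h
    · rintro ⟨a, b⟩ hab ⟨a', b'⟩ hab'
      simp only [mem_filter, mem_arcs, Arc] at hab hab'
      obtain ⟨hb, rfl⟩ := hab
      obtain ⟨hb', rfl⟩ := hab'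
      simp_all

lemma forestWeight_arcs (W : Matrix (Fin n) (Fin n) ℝ) (c : Fin n → Option (Fin n)) :
    forestWeight W (arcs c) = ∏ i, (c i).elim 1 (W i) := by
  rw [forestWeight, arcs, prod_filter, Fintype.prod_prod_type]
  refine prod_congr rfl fun i _ => ?_
  cases h : c i <;> simp [h]

open scoped Classical in
lemma prod_elim_mul_ite_eq (hW : ∀ i j, 0 ≤ W i j) (c : Fin n → Option (Fin n)) (Q : Prop) :
    (∏ i, (c i).elim 1 (W i)) * (if IsAcyclic c ∧ Q then 1 else 0)
      = if IsInForest W (arcs c) ∧ Q then forestWeight W (arcs c) else 0 := by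
  rw [forestWeight_arcs, isInForest_arcs_iff]
  by_cases hQ : IsAcyclic c ∧ Q
  · by_cases hpos : ∀ a b, Arc c a b → 0 < W a b
    · rw [if_pos hQ, if_pos ⟨⟨hQ.1, hpos⟩, hQ.2⟩, mul_one]
    · push Not at hpos
      obtain ⟨a, b, hab, hle⟩ := hpos
      have hzero : ∏ i, (c i).elim 1 (W i) = 0 :=
        prod_eq_zero (mem_univ a) (by simp [show c a = some b from hab, le_antisymm hle (hW a b)])
      rw [hzero, zero_mul, ite_self]
  · rw [if_neg hQ, if_neg fun h => hQ ⟨h.1.1, h.2⟩, mul_zero]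

open scoped Classical in
lemma sum_inForests_eq (hW : ∀ i j, 0 ≤ W i j) (P : (Fin n → Fin n → Prop) → Prop) :
    ∑ A ∈ univ.powerset,
        (if IsInForest W A ∧ P (fun a b => (a, b) ∈ A) then forestWeight W A else 0)
      = ∑ c : Fin n → Option (Fin n),
          (∏ i, (c i).elim 1 (W i)) * if IsAcyclic c ∧ P (Arc c) then 1 else 0 := by
  simp_rw [prod_elim_mul_ite_eq hW, ← arcs_rel]
  rw [← sum_filter, ← sum_filter]
  symm
  refine sum_nbij arcs (fun c hc => ?_) arcs_injective.injOn (fun A hA => ?_) fun _ _ => rfl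
  · simpa using hc
  · simp only [coe_filter, mem_powerset, subset_univ, true_and, Set.mem_ofPred_eq] at hA
    obtain ⟨c, rfl⟩ := exists_arcs_eq hA.1.2.1
    exact ⟨c, by simpa using hA, rfl⟩

open scoped Classical in
lemma sigmaTot_eq_det_one_add_lap (hW : ∀ i j, 0 ≤ W i j) : sigmaTot W = (1 + lap W).det := by
  rw [sigmaTot, sum_filter, det_one_add_lap]
  convert sum_inForests_eq hW (fun _ => True) using 1
  · exact sum_congr rfl fun A _ => by simp
  · exact sum_congr rfl fun c _ => by simp [det_one_sub_arcMatrix]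

lemma inTreeRootedAt_iff {A : Finset (Fin n × Fin n)} {i j : Fin n} :
    InTreeRootedAt A i j ↔ ReflTransGen (fun a b => (a, b) ∈ A) i j ∧ ∀ b, (j, b) ∉ A := by
  simp only [InTreeRootedAt, Prod.forall]
  exact and_congr_right' ⟨fun h b hb => h j b hb rfl, fun h a b hab haj => h b (haj ▸ hab)⟩

open scoped Classical in
lemma forestMatrixTot_eq_adjugate_one_add_lap (hW : ∀ i j, 0 ≤ W i j) :
    forestMatrixTot W = (1 + lap W).adjugate := by
  ext i j
  simp only [forestMatrixTot, of_apply]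
  rw [sum_filter, adjugate_one_add_lap_apply]
  convert sum_inForests_eq hW (fun r => ReflTransGen r i j ∧ ∀ b, ¬ r j b) using 1
  · exact sum_congr rfl fun A _ => by simp [inTreeRootedAt_iff]
  refine sum_congr rfl fun c _ => ?_
  rw [prod_elim_updateRow_zero]
  by_cases hj : c j = none
  · rw [if_pos hj, adjugate_one_sub_arcMatrix_apply hj]
    simp [Arc, hj]
  · have : ¬ ∀ b, ¬ Arc c j b := fun h => hj (Option.eq_none_iff_forall_ne_some.mpr h)
    simp [hj, this]

end Forests

end MatrixForest

theorem matrix_forest_theorem_general {n : ℕ} (W : Matrix (Fin n) (Fin n) ℝ)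
    (hW : ∀ i j, 0 ≤ W i j) :
    forestMatrixTot W = (1 + lap W).adjugate ∧
    sigmaTot W = (1 + lap W).det ∧
    (sigmaTot W)⁻¹ • forestMatrixTot W = (1 + lap W)⁻¹ := by
  have hdet := MatrixForest.sigmaTot_eq_det_one_add_lap hW
  have hadj := MatrixForest.forestMatrixTot_eq_adjugate_one_add_lap hW
  refine ⟨hadj, hdet, ?_⟩
  rw [Matrix.inv_def, Ring.inverse_eq_inv, ← hdet, ← hadj]

/-- Matrix-forest theorem: `Q = adj(I + L)`, `σ = det(I + L)`, and
`J = σ⁻¹ Q = (I + L)⁻¹`. -/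
theorem matrix_forest_theorem {n : ℕ} (W : Matrix (Fin n) (Fin n) ℝ)
    (hn : 1 < n) (hW : ∀ i j, 0 ≤ W i j) (hdiag : ∀ i, W i i = 0) :
    forestMatrixTot W = (1 + lap W).adjugate ∧
    sigmaTot W = (1 + lap W).det ∧
    (sigmaTot W)⁻¹ • forestMatrixTot W = (1 + lap W)⁻¹ :=
  matrix_forest_theorem_general W hW
end

section
/- The coefficients of the characteristic polynomial det(λI + L) = Σ_{k=0}^n c_{n−k} λ^k of −L satisfy c_k = σ_k, the total weight of in-forests of Γ with k arcs, for all k = 0, …, n. -/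
open Matrix Finset Polynomial

/-!
Row `i` of `λ • 1 + L` is `λ • eᵢ + ∑ⱼ w i j • (eᵢ - eⱼ)`. Expanding the determinant
multilinearly in the rows gives a sum over partial maps `f` (vertex `i` picks either `λ` or an
arc `i → f i`) of the product of the chosen coefficients times `det (1 - A_f)`, where `A_f` is the
adjacency matrix of the functional digraph of `f`. That determinant vanishes when `f` has a
cycle and equals `1` otherwise. The acyclic `f` whose arcs have positive weight are exactly the
in-forests, and the term of a forest with `k` arcs is its weight times `λ ^ (n - k)`.
-/

namespace Matrix

variable {ι R : Type*} [Fintype ι] [DecidableEq ι] [CommRing R]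

theorem det_of_sum_mul_rows {κ : Type*} [Fintype κ] (a : ι → κ → R) (v : ι → κ → ι → R) :
    (of fun i j => ∑ c, a i c * v i c j).det =
      ∑ f : ι → κ, (∏ i, a i (f i)) * (of fun i j => v i (f i) j).det := by
  have hrows : (of fun i j => ∑ c, a i c * v i c j) = of fun i => ∑ c, a i c • v i c := by
    ext i j
    simp [Finset.sum_apply]
  rw [hrows]
  change detRowAlternating.toMultilinearMap (fun i => ∑ c, a i c • v i c) = _
  rw [MultilinearMap.map_sum]
  refine sum_congr rfl fun f _ => ?_
  rw [MultilinearMap.map_smul_univ]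
  rfl

def partialFunMatrix (f : ι → Option ι) : Matrix ι ι R :=
  of fun i j => if f i = some j then 1 else 0

theorem partialFunMatrix_mulVec (f : ι → Option ι) (v : ι → R) (i : ι) :
    (partialFunMatrix f *ᵥ v) i = (f i).elim 0 v := by
  cases hi : f i <;> simp [partialFunMatrix, mulVec, dotProduct, hi]

theorem det_one_sub_partialFunMatrix_of_transGen [IsDomain R] {f : ι → Option ι} {i : ι}
    (hi : Relation.TransGen (fun a b => f a = some b) i i) :
    (1 - partialFunMatrix f : Matrix ι ι R).det = 0 := by
  set r : ι → ι → Prop := fun a b => f a = some b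
  obtain ⟨c, hic, hci⟩ := Relation.TransGen.head'_iff.mp hi
  have hstep : ∀ a b, f a = some b →
      (Relation.ReflTransGen r a i ↔ Relation.ReflTransGen r b i) := by
    refine fun a b hab => ⟨fun ha => ?_, Relation.ReflTransGen.head hab⟩
    rcases Relation.ReflTransGen.cases_head ha with rfl | ⟨y, hay, hy⟩
    · exact Option.some_injective _ (hic.symm.trans hab) ▸ hci
    · exact Option.some_injective _ (hay.symm.trans hab) ▸ hy
  have hnone : ∀ a, f a = none → ¬ Relation.ReflTransGen r a i := by
    intro a ha h
    rcases Relation.ReflTransGen.cases_head h with rfl | ⟨y, hay, -⟩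
    · exact Option.some_ne_none c (hic.symm.trans ha)
    · exact Option.some_ne_none y (hay.symm.trans ha)
  classical
  -- the indicator of the vertices draining into the cycle through `i` is a null vector
  rw [← exists_mulVec_eq_zero_iff]
  refine ⟨fun a => if Relation.ReflTransGen r a i then 1 else 0,
    fun h => by simpa [Relation.ReflTransGen.refl] using congrFun h i, funext fun a => ?_⟩
  rw [sub_mulVec, one_mulVec, Pi.sub_apply, partialFunMatrix_mulVec]
  cases ha : f a with
  | none => simp [hnone a ha]
  | some b => simp [hstep a b ha]

theorem det_one_sub_partialFunMatrix_of_acyclic {f : ι → Option ι}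
    (hf : ∀ i, ¬ Relation.TransGen (fun a b => f a = some b) i i) :
    (1 - partialFunMatrix f : Matrix ι ι R).det = 1 := by
  classical
  set r : ι → ι → Prop := fun a b => f a = some b
  -- heights strictly drop along arcs, so the matrix is triangular with unit diagonal
  set height : ι → ℕ := fun a => #{b | Relation.TransGen r a b}
  have height_lt : ∀ a b, f a = some b → height b < height a := by
    refine fun a b hab => card_lt_card ⟨fun c hc => ?_, fun hsub => hf b ?_⟩
    · simp only [mem_filter, mem_univ, true_and] at hc ⊢
      exact .head hab hc
    · exact (mem_filter.mp (hsub (mem_filter.mpr ⟨mem_univ _, .single hab⟩))).2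
  have hoff : ∀ a b, a ≠ b → height a ≤ height b →
      (1 - partialFunMatrix f : Matrix ι ι R) a b = 0 := by
    intro a b hne hle
    have : f a ≠ some b := fun hab => (height_lt a b hab).not_ge hle
    simp [partialFunMatrix, hne, this]
  have htri :
      (1 - partialFunMatrix f : Matrix ι ι R).BlockTriangular (OrderDual.toDual ∘ height) :=
    fun a b hlt => hoff a b (fun h => (h ▸ hlt).false) hlt.le
  rw [htri.det]
  refine prod_eq_one fun k _ => ?_
  have hblock :
      (1 - partialFunMatrix f : Matrix ι ι R).toSquareBlock (OrderDual.toDual ∘ height) k = 1 := by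
    ext ⟨a, ha⟩ ⟨b, hb⟩
    rcases eq_or_ne a b with rfl | hne
    · have : f a ≠ some a := fun haa => hf a (.single haa)
      simp [toSquareBlock_def, partialFunMatrix, this]
    · have hab := hoff a b hne (OrderDual.toDual_inj.mp (ha.trans hb.symm)).le
      simpa [toSquareBlock_def, hne] using hab
  rw [hblock, det_one]

end Matrix

section ArcSet

variable {ι : Type*} [Fintype ι] [DecidableEq ι]

def arcSet (f : ι → Option ι) : Finset (ι × ι) := {e | f e.1 = some e.2}

@[simp]
theorem mem_arcSet {f : ι → Option ι} {e : ι × ι} : e ∈ arcSet f ↔ f e.1 = some e.2 := by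
  simp [arcSet]

theorem arcSet_injective : Function.Injective (arcSet : (ι → Option ι) → Finset (ι × ι)) :=
  fun f g h => funext fun i => Option.ext fun j => by simpa using Finset.ext_iff.mp h (i, j)

theorem card_filter_arcSet_fst_le_one (f : ι → Option ι) (i : ι) :
    #{e ∈ arcSet f | e.1 = i} ≤ 1 :=
  card_le_one.mpr fun e he e' he' => by
    simp only [mem_filter, mem_arcSet] at he he'
    refine Prod.ext (he.2.trans he'.2.symm) (Option.some_injective _ ?_)
    rw [← he.1, ← he'.1, he.2, he'.2]

theorem exists_arcSet_eq {A : Finset (ι × ι)} (hA : ∀ i, #{e ∈ A | e.1 = i} ≤ 1) :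
    ∃ f, arcSet f = A := by
  have (i : ι) : ∃ c : Option ι, ∀ j, c = some j ↔ (i, j) ∈ A := by
    by_cases h : ∃ j, (i, j) ∈ A
    · obtain ⟨j, hj⟩ := h
      refine ⟨some j, fun j' => ⟨fun h' => Option.some_injective _ h' ▸ hj, fun hj' => ?_⟩⟩
      have := card_le_one.mp (hA i) _ (mem_filter.mpr ⟨hj, rfl⟩) _ (mem_filter.mpr ⟨hj', rfl⟩)
      exact congrArg (some ·.2) this
    · simp only [not_exists] at h
      exact ⟨none, fun j => by simp [h j]⟩
  choose f hf using this
  exact ⟨f, ext fun e => by simp [hf]⟩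

@[to_additive]
theorem prod_arcSet {M : Type*} [CommMonoid M] (f : ι → Option ι) (g : ι → ι → M) :
    ∏ e ∈ arcSet f, g e.1 e.2 = ∏ i, (f i).elim 1 (g i) := by
  rw [arcSet, prod_filter, Fintype.prod_prod_type]
  refine prod_congr rfl fun i _ => ?_
  cases hi : f i <;> simp [hi]

theorem card_arcSet_add_card_filter_eq_none (f : ι → Option ι) :
    #(arcSet f) + #{i | f i = none} = Fintype.card ι := by
  rw [card_eq_sum_ones, sum_arcSet f fun _ _ => 1, card_filter, ← sum_add_distrib, ← card_univ,
    card_eq_sum_ones]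
  refine sum_congr rfl fun i _ => ?_
  cases f i <;> simp

theorem prod_elim_eq_prod_arcSet_mul_pow {M : Type*} [CommMonoid M] (f : ι → Option ι) (x : M)
    (g : ι → ι → M) :
    ∏ i, (f i).elim x (g i) =
      (∏ e ∈ arcSet f, g e.1 e.2) * x ^ (Fintype.card ι - #(arcSet f)) := by
  rw [← card_arcSet_add_card_filter_eq_none f, Nat.add_sub_cancel_left, ← prod_const,
    prod_filter, prod_arcSet, ← prod_mul_distrib]
  refine prod_congr rfl fun i _ => ?_
  cases f i <;> simp

end ArcSet

section InForest

variable {n : ℕ} {W : Matrix (Fin n) (Fin n) ℝ}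

theorem IsInForest.card_le {A : Finset (Fin n × Fin n)} (hA : IsInForest W A) : #A ≤ n := by
  calc #A = ∑ i : Fin n, #{e ∈ A | e.1 = i} := card_eq_sum_card_fiberwise fun e _ => mem_univ e.1
    _ ≤ ∑ _i : Fin n, 1 := sum_le_sum fun i _ => hA.2.1 i
    _ = n := by simp

theorem isInForest_arcSet_iff {f : Fin n → Option (Fin n)} :
    IsInForest W (arcSet f) ↔
      (∀ i j, f i = some j → 0 < W i j) ∧
        ∀ i, ¬ Relation.TransGen (fun a b => f a = some b) i i := by
  simp only [IsInForest, mem_arcSet]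
  refine ⟨fun h => ⟨fun i j hij => (h.1 (i, j) hij).2, h.2.2⟩,
    fun ⟨hpos, hacyc⟩ => ⟨fun e he => ⟨fun hloop => hacyc e.1 (.single (hloop ▸ he)), hpos _ _ he⟩,
      card_filter_arcSet_fst_le_one f, hacyc⟩⟩

open scoped Classical in
theorem image_arcSet_filter_isInForest :
    ({f | IsInForest W (arcSet f)} : Finset (Fin n → Option (Fin n))).image arcSet =
      univ.powerset.filter (IsInForest W) := by
  ext A
  simp only [mem_image, mem_filter, mem_univ, true_and, mem_powerset, subset_univ]
  refine ⟨fun ⟨f, hf, hfA⟩ => hfA ▸ hf, fun hA => ?_⟩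
  obtain ⟨f, rfl⟩ := exists_arcSet_eq hA.2.1
  exact ⟨f, hA, rfl⟩

open scoped Classical in
theorem sum_sigmaW_mul_pow_eq_sum_isInForest (W : Matrix (Fin n) (Fin n) ℝ) (x : ℝ) :
    ∑ k ∈ range (n + 1), sigmaW W k * x ^ (n - k) =
      ∑ A ∈ univ.powerset.filter (IsInForest W), forestWeight W A * x ^ (n - #A) := by
  have hcard : ∀ A ∈ univ.powerset.filter (IsInForest W), #A ∈ range (n + 1) :=
    fun A hA => mem_range_succ_iff.mpr (mem_filter.mp hA).2.card_le
  rw [← sum_fiberwise_of_maps_to hcard]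
  refine sum_congr rfl fun k _ => ?_
  rw [sigmaW, sum_mul, filter_filter]
  exact sum_congr rfl fun A hA => by rw [(mem_filter.mp hA).2.2]

theorem det_smul_one_add_lap (W : Matrix (Fin n) (Fin n) ℝ) (x : ℝ) :
    (x • (1 : Matrix (Fin n) (Fin n) ℝ) + lap W).det =
      ∑ f : Fin n → Option (Fin n),
        (∏ i, (f i).elim x (W i)) * (1 - partialFunMatrix f : Matrix (Fin n) (Fin n) ℝ).det := by
  -- row `i` is `x • eᵢ + ∑ⱼ W i j • (eᵢ - eⱼ)`, to be expanded multilinearly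
  have hrows : x • (1 : Matrix (Fin n) (Fin n) ℝ) + lap W = of fun i j =>
      ∑ c : Option (Fin n),
        c.elim x (W i) * ((1 : Matrix (Fin n) (Fin n) ℝ) i j - if c = some j then 1 else 0) := by
    ext i j
    simp only [lap, Matrix.add_apply, Matrix.smul_apply, one_apply, smul_eq_mul, mul_ite, mul_one,
      mul_zero, Matrix.sub_apply, diagonal_apply, mul_sub, sum_sub_distrib, sum_ite_irrel,
      Fintype.sum_option, Option.elim_none, Option.elim_some, sum_const_zero, sum_ite_eq', mem_univ,
      ↓reduceIte, of_apply]
    split_ifs <;> ring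
  rw [hrows, det_of_sum_mul_rows]
  rfl

theorem isInForest_arcSet_of_mul_det_ne_zero (hW : ∀ i j, 0 ≤ W i j) {x : ℝ}
    {f : Fin n → Option (Fin n)}
    (h : (∏ i, (f i).elim x (W i)) * (1 - partialFunMatrix f : Matrix (Fin n) (Fin n) ℝ).det ≠ 0) :
    IsInForest W (arcSet f) := by
  obtain ⟨hprod, hdet⟩ := mul_ne_zero_iff.mp h
  refine isInForest_arcSet_iff.mpr ⟨fun i j hij => (hW i j).lt_of_ne' ?_,
    fun i hi => hdet (det_one_sub_partialFunMatrix_of_transGen hi)⟩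
  simpa [hij] using prod_ne_zero_iff.mp hprod i (mem_univ i)

end InForest

theorem det_charMatrix_eq_sum_sigma_general {n : ℕ} (W : Matrix (Fin n) (Fin n) ℝ)
    (hW : ∀ i j, 0 ≤ W i j) :
    ∀ lam : ℝ,
      (lam • (1 : Matrix (Fin n) (Fin n) ℝ) + lap W).det =
        ∑ k ∈ Finset.range (n + 1), sigmaW W k * lam ^ (n - k) := by
  classical
  intro lam
  rw [det_smul_one_add_lap, sum_sigmaW_mul_pow_eq_sum_isInForest, ← image_arcSet_filter_isInForest,
    sum_image arcSet_injective.injOn,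
    ← sum_filter_of_ne fun f _ => isInForest_arcSet_of_mul_det_ne_zero hW]
  refine sum_congr rfl fun f hf => ?_
  rw [det_one_sub_partialFunMatrix_of_acyclic (isInForest_arcSet_iff.mp (mem_filter.mp hf).2).2,
    mul_one, prod_elim_eq_prod_arcSet_mul_pow f lam W, forestWeight, Fintype.card_fin]

/-- The coefficients of `det(λI + L) = Σ_{k=0}^n c_{n-k} λ^k` satisfy `c_k = σ_k`:
`det(λI + L) = Σ_{k=0}^n σ_k λ^{n-k}`. -/
theorem det_charMatrix_eq_sum_sigma {n : ℕ} (W : Matrix (Fin n) (Fin n) ℝ)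
    (hn : 1 < n) (hW : ∀ i j, 0 ≤ W i j) (hdiag : ∀ i, W i i = 0) :
    ∀ lam : ℝ,
      (lam • (1 : Matrix (Fin n) (Fin n) ℝ) + lap W).det =
        ∑ k ∈ Finset.range (n + 1), sigmaW W k * lam ^ (n - k) :=
  det_charMatrix_eq_sum_sigma_general W hW
end

section
/- The trace of the in-forest matrix Q_k equals (n−k)σ_k for every k, reflecting that each in-forest with k arcs has exactly n−k roots. -/
open Matrix Finset Polynomial

/-! A vertex is the root of its own tree exactly when it has no outgoing arc. Since every vertex
has outdegree at most one, the `k` arcs of a forest have `k` distinct tails, so each in-forest with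
`k` arcs contributes its weight to exactly `n - k` diagonal entries of `Q_k`. -/

lemma Finset.injOn_fst_of_card_filter_fst_le_one {α β : Type*} [DecidableEq α]
    {A : Finset (α × β)} (hA : ∀ a, (A.filter (fun e => e.1 = a)).card ≤ 1) :
    Set.InjOn Prod.fst (A : Set (α × β)) := by
  intro e₁ h₁ e₂ h₂ he
  by_contra hne
  have : 1 < (A.filter (fun e => e.1 = e₁.1)).card :=
    one_lt_card.2 ⟨e₁, by simp_all, e₂, by simp_all, hne⟩
  exact (hA e₁.1).not_gt this

lemma inTreeRootedAt_self_iff {n : ℕ} (A : Finset (Fin n × Fin n)) (i : Fin n) :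
    InTreeRootedAt A i i ↔ i ∉ A.image Prod.fst := by
  simp only [InTreeRootedAt, Relation.ReflTransGen.refl, true_and, mem_image, not_exists,
    not_and, Prod.exists]
  exact ⟨fun h a b hab hai => h _ hab hai, fun h e he hei => h _ _ he hei⟩

open scoped Classical in
lemma IsInForest.card_filter_inTreeRootedAt_self {n : ℕ} {W : Matrix (Fin n) (Fin n) ℝ}
    {A : Finset (Fin n × Fin n)} (hA : IsInForest W A) :
    (univ.filter fun i => InTreeRootedAt A i i).card = n - A.card := by
  have hroots : (univ.filter fun i => InTreeRootedAt A i i) = univ \ A.image Prod.fst := by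
    ext i
    simp [inTreeRootedAt_self_iff]
  rw [hroots, card_sdiff_of_subset (subset_univ _), card_univ, Fintype.card_fin,
    card_image_of_injOn (Finset.injOn_fst_of_card_filter_fst_le_one hA.2.1)]

theorem trace_forestMatrix_general {n : ℕ} (W : Matrix (Fin n) (Fin n) ℝ) :
    ∀ k : ℕ, (forestMatrix W k).trace = ((n - k : ℕ) : ℝ) * sigmaW W k := by
  classical
  intro k
  set S := univ.powerset.filter fun A => IsInForest W A ∧ A.card = k
  calc (forestMatrix W k).trace
      = ∑ i : Fin n, ∑ A ∈ S, if InTreeRootedAt A i i then forestWeight W A else 0 := by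
        refine sum_congr rfl fun i _ => ?_
        rw [← sum_filter, filter_filter]
        exact sum_congr (filter_congr fun A _ => by tauto) fun _ _ => rfl
    _ = ∑ A ∈ S, ∑ i : Fin n, if InTreeRootedAt A i i then forestWeight W A else 0 := sum_comm
    _ = ∑ A ∈ S, ((n - k : ℕ) : ℝ) * forestWeight W A := by
        refine sum_congr rfl fun A hA => ?_
        obtain ⟨-, hforest, rfl⟩ := mem_filter.1 hA
        rw [← sum_filter, sum_const, hforest.card_filter_inTreeRootedAt_self, nsmul_eq_mul]
    _ = ((n - k : ℕ) : ℝ) * sigmaW W k := by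
        rw [sigmaW, mul_sum]

/-- `tr Q_k = (n − k) σ_k` for every `k`. -/
theorem trace_forestMatrix {n : ℕ} (W : Matrix (Fin n) (Fin n) ℝ)
    (hn : 1 < n) (hW : ∀ i j, 0 ≤ W i j) (hdiag : ∀ i, W i i = 0) :
    ∀ k : ℕ, (forestMatrix W k).trace = ((n - k : ℕ) : ℝ) * sigmaW W k :=
  trace_forestMatrix_general W
end
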